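/- Suppose Assumptions 1, 2, and 3 hold, λ ≥ 1, λ < λ̄, and additionally lim_{K→0⁺} F(K,1)/K = ∞ (Inada condition at zero). Then the equilibrium dynamics has a steady state: there exist K > 0 and z̄ with Φ(z̄) > 1 − 1/λ such that K = βλ·W(K,z̄)·∫_{z̄}^∞ z dΦ(z) and z̄ = (P(K,z̄) + F_X(K,1))/(F_K(K,1)·P(K,z̄)). (Proposition 2, part 1: existence of a steady state when leverage is below the threshold.) -/

import Mathlib

open Filter Topology MeasureTheory

/-- **Assumption 1.** `Φ` (the law `μ` of productivity) is an absolutely continuous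
cdf on `[0,∞)` with `Φ(z) < 1` for all `z` and a finite mean. -/
structure Assumption1 (μ : Measure ℝ) : Prop where
  prob : IsProbabilityMeasure μ
  supp : μ (Set.Iio 0) = 0
  absCont : μ ≪ MeasureTheory.volume
  lt_one : ∀ z : ℝ, μ (Set.Iic z) < 1
  finite_mean : Integrable id μ

/-- The cdf `Φ` of the productivity distribution `μ`. -/
noncomputable def Phi (μ : Measure ℝ) (z : ℝ) : ℝ := (μ (Set.Iic z)).toReal

/-- **Assumption 2.** `F` is homogeneous of degree one, concave, continuously
differentiable with positive marginal products `FK`, `FX`, and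
`F(K,1)/K → m`, `F_K(K,1) → m` as `K → ∞` with `m > 0`. -/
structure Assumption2 (F FK FX : ℝ → ℝ → ℝ) (m : ℝ) : Prop where
  pos : ∀ K X : ℝ, 0 < K → 0 < X → 0 < F K X
  homog : ∀ c K X : ℝ, 0 < c → 0 < K → 0 < X → F (c * K) (c * X) = c * F K X
  concave : ConcaveOn ℝ (Set.Ioi 0 ×ˢ Set.Ioi 0) (fun p : ℝ × ℝ => F p.1 p.2)
  hFK : ∀ K X : ℝ, 0 < K → 0 < X → HasDerivAt (fun k => F k X) (FK K X) K
  hFX : ∀ K X : ℝ, 0 < K → 0 < X → HasDerivAt (fun x => F K x) (FX K X) X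
  FK_pos : ∀ K X : ℝ, 0 < K → 0 < X → 0 < FK K X
  FX_pos : ∀ K X : ℝ, 0 < K → 0 < X → 0 < FX K X
  FK_cont : ContinuousOn (fun p : ℝ × ℝ => FK p.1 p.2) (Set.Ioi 0 ×ˢ Set.Ioi 0)
  FX_cont : ContinuousOn (fun p : ℝ × ℝ => FX p.1 p.2) (Set.Ioi 0 ×ˢ Set.Ioi 0)
  m_pos : 0 < m
  lim_avg : Filter.Tendsto (fun K => F K 1 / K) Filter.atTop (nhds m)
  lim_FK : Filter.Tendsto (fun K => FK K 1) Filter.atTop (nhds m)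

/-- The leverage threshold `λ̄ = ((1−β)/β)·(∫ max{mz−1, 0} dΦ(z))⁻¹`. -/
noncomputable def lamBar (β m : ℝ) (μ : Measure ℝ) : ℝ :=
  ((1 - β) / β) * (∫ z, max (m * z - 1) 0 ∂μ)⁻¹

/-- Aggregate wealth `W(K, z̄)` as a function of capital and the investment threshold. -/
noncomputable def Wfun (μ : Measure ℝ) (β lam : ℝ) (F : ℝ → ℝ → ℝ) (K zb : ℝ) : ℝ :=
  F K 1 / (1 - β * (lam * Phi μ zb + 1 - lam))

/-- Land price `P(K, z̄)` as a function of capital and the investment threshold. -/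
noncomputable def Pfun (μ : Measure ℝ) (β lam : ℝ) (F : ℝ → ℝ → ℝ) (K zb : ℝ) : ℝ :=
  β * (lam * Phi μ zb + 1 - lam) * F K 1 / (1 - β * (lam * Phi μ zb + 1 - lam))

/-!
Write `x(z) = β (λ Φ(z) + 1 - λ)` for the ratio `P / W`. After clearing denominators the
threshold equation reads `x(z) (F_K F z + F_X - F) = F_X`. As `x` is nondecreasing and the affine
factor is increasing, the difference of the two sides changes sign exactly once where `x ≥ 0`;
this root `r(K)` therefore depends continuously on `K`, and it is bounded because `F_K ≥ m` and
`F_X ≤ 2 F` by concavity.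

The capital equation becomes `K = β λ F(K,1) I(r K) / (1 - x(r K))` with `I(z) = ∫_{z}^∞ t dΦ`.
By the Inada condition the right side exceeds `K` for small `K`. For large `K`, `F(K,1)/K ≈ m`,
and the pointwise bound `1_{t ≤ z} + m t 1_{t > z} ≤ 1 + max (m t - 1) 0` gives
`x(z) + β λ m I(z) ≤ β + β λ ∫ max (m t - 1) 0 dΦ < 1`, which is exactly `λ < λ̄`; so the right
side falls below `K`. The intermediate value theorem yields the steady state.
-/

open Set ProbabilityTheory

structure IsSingleCrossing (f : ℝ → ℝ) (s r : ℝ) : Prop where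
  lt : s < r
  apply_eq_zero : f r = 0
  neg_of_lt : ∀ z, s < z → z < r → f z < 0
  pos_of_gt : ∀ z, r < z → 0 < f z

namespace IsSingleCrossing

variable {f : ℝ → ℝ} {s r z : ℝ}

lemma lt_of_neg (h : IsSingleCrossing f s r) (hz : s < z) (hfz : f z < 0) : z < r := by
  by_contra! hrz
  rcases hrz.eq_or_lt with rfl | hrz
  · exact hfz.ne h.apply_eq_zero
  · exact (h.pos_of_gt z hrz).not_gt hfz

lemma gt_of_pos (h : IsSingleCrossing f s r) (hz : s < z) (hfz : 0 < f z) : r < z := by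
  by_contra! hzr
  rcases hzr.eq_or_lt with rfl | hzr
  · exact hfz.ne' h.apply_eq_zero
  · exact (h.neg_of_lt z hz hzr).not_gt hfz

end IsSingleCrossing

theorem continuousAt_of_isSingleCrossing {X : Type*} [TopologicalSpace X] {H : X → ℝ → ℝ}
    {r : X → ℝ} {s : ℝ} {x₀ : X} (hH : ∀ z, ContinuousAt (fun x => H x z) x₀)
    (hr : ∀ᶠ x in 𝓝 x₀, IsSingleCrossing (H x) s (r x)) : ContinuousAt r x₀ := by
  have h₀ := hr.self_of_nhds
  refine tendsto_order.2 ⟨fun a ha => ?_, fun b hb => ?_⟩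
  · set z := max a ((s + r x₀) / 2)
    have hsz : s < z := lt_max_of_lt_right (by linarith [h₀.lt])
    have hzr : z < r x₀ := max_lt ha (by linarith [h₀.lt])
    filter_upwards [hr, (hH z).eventually (gt_mem_nhds (h₀.neg_of_lt z hsz hzr))] with x hx hxz
    exact (le_max_left _ _).trans_lt (hx.lt_of_neg hsz hxz)
  · filter_upwards [hr, (hH b).eventually (lt_mem_nhds (h₀.pos_of_gt b hb))] with x hx hxb
    exact hx.gt_of_pos (h₀.lt.trans hb) hxb

lemma pos_and_pos_of_mul_sub_eq_zero {u v c : ℝ} (hu : 0 ≤ u) (hc : 0 < c)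
    (h : u * v - c = 0) : 0 < u ∧ 0 < v :=
  (pos_and_pos_or_neg_and_neg_of_mul_pos (by linarith)).resolve_right fun h' => hu.not_gt h'.1

/-- At a root `r` both factors of `x r * (a * r + b) = c > 0` are positive; to the right of `r`
both then grow, to the left the first factor can only shrink. -/
lemma isSingleCrossing_of_apply_eq_zero {x : ℝ → ℝ} (hx : Monotone x) {a b c s r : ℝ}
    (ha : 0 < a) (hc : 0 < c) (hs : 0 ≤ x s) (hsr : s < r) (hr : x r * (a * r + b) - c = 0) :
    IsSingleCrossing (fun z => x z * (a * z + b) - c) s r := by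
  obtain ⟨hxr, hAr⟩ := pos_and_pos_of_mul_sub_eq_zero (hs.trans (hx hsr.le)) hc hr
  refine ⟨hsr, hr, fun z hsz hzr => ?_, fun z hrz => ?_⟩
  · have hxz : x z ≤ x r := hx hzr.le
    have hxz₀ : 0 ≤ x z := hs.trans (hx hsz.le)
    rcases le_or_gt (a * z + b) 0 with hA | hA
    · nlinarith [mul_nonpos_of_nonneg_of_nonpos hxz₀ hA]
    · nlinarith [mul_le_mul_of_nonneg_right hxz hA.le, mul_lt_mul_of_pos_left
        (show a * z + b < a * r + b by nlinarith) hxr]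
  · have hxz : x r ≤ x z := hx hrz.le
    nlinarith [mul_le_mul_of_nonneg_right hxz (show 0 ≤ a * z + b by nlinarith),
      mul_lt_mul_of_pos_left (show a * r + b < a * z + b by nlinarith) hxr]

lemma exists_isSingleCrossing {x : ℝ → ℝ} (hx : Monotone x) (hxc : Continuous x)
    {a b c s Z : ℝ} (ha : 0 < a) (hc : 0 < c) (hs : x s = 0) (hsZ : s ≤ Z)
    (hZ : 0 < x Z * (a * Z + b) - c) :
    ∃ r ∈ Ioc s Z, 0 < x r ∧ IsSingleCrossing (fun z => x z * (a * z + b) - c) s r := by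
  obtain ⟨r, ⟨hsr, hrZ⟩, hr⟩ := intermediate_value_Icc hsZ
    (f := fun z => x z * (a * z + b) - c) (by fun_prop) ⟨by simp [hs, hc.le], hZ.le⟩
  have hsr' : s < r := hsr.lt_of_ne (by rintro rfl; simp [hs] at hr; linarith)
  exact ⟨r, ⟨hsr', hrZ⟩, (pos_and_pos_of_mul_sub_eq_zero (hs ▸ hx hsr) hc hr).1,
    isSingleCrossing_of_apply_eq_zero hx ha hc hs.ge hsr' hr⟩

theorem continuous_setIntegral_Ioi {μ : Measure ℝ} [NullSingletonClass μ] {g : ℝ → ℝ}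
    (hg : Integrable g μ) : Continuous fun z => ∫ t in Ioi z, g t ∂μ := by
  simp_rw [← integral_indicator measurableSet_Ioi]
  refine continuous_iff_continuousAt.2 fun z₀ => continuousAt_of_dominated
    (Eventually.of_forall fun _ => hg.aestronglyMeasurable.indicator measurableSet_Ioi)
    (Eventually.of_forall fun _ => Eventually.of_forall fun _ => norm_indicator_le_norm_self _ _)
    hg.norm ?_
  -- away from `t = z₀`, a null set, the integrand is locally constant in `z`
  filter_upwards [μ.ae_ne z₀] with t ht
  rcases ht.lt_or_gt with h | h
  · refine (continuousAt_const (y := 0)).congr ?_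
    filter_upwards [eventually_gt_nhds h] with z hz
    simp [indicator_of_notMem (notMem_Ioi.2 hz.le)]
  · refine (continuousAt_const (y := g t)).congr ?_
    filter_upwards [eventually_lt_nhds h] with z hz
    simp [indicator_of_mem (mem_Ioi.2 hz)]

lemma Phi_eq_cdf (μ : Measure ℝ) [IsProbabilityMeasure μ] : Phi μ = cdf μ := by
  ext z
  rw [cdf_eq_real, Phi, measureReal_def]

lemma continuous_Phi (μ : Measure ℝ) [IsProbabilityMeasure μ] [NullSingletonClass μ] :
    Continuous (Phi μ) := by
  have h : Phi μ = fun z => 1 - ∫ _ in Ioi z, (1 : ℝ) ∂μ := by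
    ext z
    rw [setIntegral_const, smul_eq_mul, mul_one, ← compl_Iic, measureReal_compl measurableSet_Iic,
      probReal_univ, Phi, measureReal_def, sub_sub_cancel]
  rw [h]
  exact continuous_const.sub (continuous_setIntegral_Ioi (integrable_const 1))

lemma Phi_add_mul_setIntegral_Ioi_le {μ : Measure ℝ} [IsProbabilityMeasure μ]
    (hint : Integrable id μ) (m z : ℝ) :
    Phi μ z + m * ∫ t in Ioi z, t ∂μ ≤ 1 + ∫ t, max (m * t - 1) 0 ∂μ := by
  have hmt : Integrable (fun t => m * t) μ := hint.const_mul m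
  have hlow : Integrable ((Iic z).indicator fun _ => (1 : ℝ)) μ :=
    (integrable_const 1).indicator measurableSet_Iic
  have hhigh : Integrable ((Ioi z).indicator (m * ·)) μ :=
    hmt.indicator measurableSet_Ioi
  have hexcess : Integrable (fun t => max (m * t - 1) 0) μ :=
    (hmt.sub (integrable_const 1)).pos_part
  calc Phi μ z + m * ∫ t in Ioi z, t ∂μ
      = ∫ t, ((Iic z).indicator (fun _ => (1 : ℝ)) t + (Ioi z).indicator (m * ·) t) ∂μ := by
        rw [integral_add hlow hhigh, integral_indicator measurableSet_Iic,
          integral_indicator measurableSet_Ioi, setIntegral_const, integral_const_mul, Phi,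
          measureReal_def, smul_eq_mul, mul_one]
    _ ≤ ∫ t, (1 + max (m * t - 1) 0) ∂μ := by
        refine integral_mono (hlow.add hhigh) ((integrable_const 1).add hexcess) fun t => ?_
        by_cases ht : t ≤ z
        · simp [ht]
        · simp only [indicator_of_notMem (notMem_Iic.2 (not_le.1 ht)),
            indicator_of_mem (mem_Ioi.2 (not_le.1 ht))]
          linarith [le_max_left (m * t - 1) 0]
    _ = 1 + ∫ t, max (m * t - 1) 0 ∂μ := by
        rw [integral_add (integrable_const 1) hexcess, integral_const, probReal_univ, one_smul]

namespace Assumption1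

variable {μ : Measure ℝ}

lemma nullSingletonClass (hμ : Assumption1 μ) : NullSingletonClass μ :=
  ⟨fun _ => hμ.absCont Real.volume_singleton⟩

lemma Phi_zero (hμ : Assumption1 μ) : Phi μ 0 = 0 := by
  have := hμ.nullSingletonClass
  rw [Phi, ← measure_congr Iio_ae_eq_Iic, hμ.supp, ENNReal.toReal_zero]

lemma continuous_setIntegral_Ioi_id (hμ : Assumption1 μ) : Continuous fun z => ∫ t in Ioi z, t ∂μ :=
  have := hμ.nullSingletonClass
  continuous_setIntegral_Ioi hμ.finite_mean

lemma nonneg_ae (hμ : Assumption1 μ) : 0 ≤ᵐ[μ] id := by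
  rw [EventuallyLE, ae_iff]
  simpa [Iio] using hμ.supp

lemma setIntegral_Ioi_nonneg (hμ : Assumption1 μ) (z : ℝ) : 0 ≤ ∫ t in Ioi z, t ∂μ :=
  integral_nonneg_of_ae (ae_restrict_of_ae hμ.nonneg_ae)

lemma setIntegral_Ioi_le_integral (hμ : Assumption1 μ) (z : ℝ) : ∫ t in Ioi z, t ∂μ ≤ ∫ t, t ∂μ :=
  setIntegral_le_integral hμ.finite_mean hμ.nonneg_ae

lemma setIntegral_Ioi_anti (hμ : Assumption1 μ) : Antitone fun z => ∫ t in Ioi z, t ∂μ :=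
  fun _ _ h => setIntegral_mono_set hμ.finite_mean.integrableOn (ae_restrict_of_ae hμ.nonneg_ae)
    (Eventually.of_forall (Ioi_subset_Ioi h))

lemma setIntegral_Ioi_pos (hμ : Assumption1 μ) {z : ℝ} (hz : 0 < z) : 0 < ∫ t in Ioi z, t ∂μ := by
  have := hμ.prob
  have hΦ : 0 < μ.real (Ioi z) := by
    rw [← compl_Iic, measureReal_compl measurableSet_Iic, probReal_univ, sub_pos, measureReal_def]
    exact ENNReal.toReal_lt_of_lt_ofReal (by simpa using hμ.lt_one z)
  calc 0 < μ.real (Ioi z) * z := mul_pos hΦ hz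
    _ = ∫ _ in Ioi z, z ∂μ := by rw [setIntegral_const, smul_eq_mul]
    _ ≤ ∫ t in Ioi z, t ∂μ :=
      setIntegral_mono_on (integrableOn_const (measure_ne_top _ _)) hμ.finite_mean.integrableOn
        measurableSet_Ioi fun t ht => (mem_Ioi.1 ht).le

end Assumption1

namespace Assumption2

variable {F FK FX : ℝ → ℝ → ℝ} {m : ℝ}

lemma concaveOn_left (hF : Assumption2 F FK FX m) {X : ℝ} (hX : 0 < X) :
    ConcaveOn ℝ (Ioi 0) fun K => F K X :=
  (hF.concave.comp_affineMap ((AffineMap.id ℝ ℝ).prod (AffineMap.const ℝ ℝ X))).subset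
    (fun _ hK => ⟨hK, hX⟩) (convex_Ioi 0)

lemma concaveOn_right (hF : Assumption2 F FK FX m) {K : ℝ} (hK : 0 < K) :
    ConcaveOn ℝ (Ioi 0) fun X => F K X :=
  (hF.concave.comp_affineMap ((AffineMap.const ℝ ℝ K).prod (AffineMap.id ℝ ℝ))).subset
    (fun _ hX => ⟨hK, hX⟩) (convex_Ioi 0)

/-- The tangent line of `F (·, 1)` at `K` lies above the graph, whose slope tends to `m`. -/
lemma le_FK (hF : Assumption2 F FK FX m) {K : ℝ} (hK : 0 < K) : m ≤ FK K 1 := by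
  have hchord : ∀ y, K < y → F y 1 / y ≤ F K 1 / y + FK K 1 * (1 - K / y) := by
    intro y hy
    have hy₀ : 0 < y := hK.trans hy
    have h := (hF.concaveOn_left one_pos).slope_le_of_hasDerivAt hK hy₀ hy (hF.hFK K 1 hK one_pos)
    rw [slope_def_field, div_le_iff₀ (sub_pos.2 hy)] at h
    rw [div_add' _ _ _ hy₀.ne', mul_one_sub, div_le_div_iff_of_pos_right hy₀]
    field_simp
    linarith
  have hlim : Tendsto (fun y => F K 1 / y + FK K 1 * (1 - K / y)) atTop (𝓝 (FK K 1)) := by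
    have h₀ : ∀ c : ℝ, Tendsto (fun y => c / y) atTop (𝓝 0) := fun c =>
      tendsto_const_nhds.div_atTop tendsto_id
    simpa using (h₀ (F K 1)).add (((h₀ K).const_sub 1).const_mul (FK K 1))
  exact le_of_tendsto_of_tendsto hF.lim_avg hlim
    ((eventually_gt_atTop K).mono fun y hy => hchord y hy)

lemma FX_le (hF : Assumption2 F FK FX m) {K : ℝ} (hK : 0 < K) : FX K 1 ≤ 2 * F K 1 := by
  have h := (hF.concaveOn_right hK).le_slope_of_hasDerivAt (by norm_num : (1 : ℝ) / 2 ∈ Ioi 0)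
    (mem_Ioi.2 one_pos) (by norm_num) (hF.hFX K 1 hK one_pos)
  rw [slope_def_field] at h
  norm_num at h
  linarith [hF.pos K (1 / 2) hK (by norm_num)]

lemma continuousAt_F (hF : Assumption2 F FK FX m) {K : ℝ} (hK : 0 < K) :
    ContinuousAt (fun K => F K 1) K :=
  (hF.hFK K 1 hK one_pos).continuousAt

lemma continuousAt_FK (hF : Assumption2 F FK FX m) {K : ℝ} (hK : 0 < K) :
    ContinuousAt (fun K => FK K 1) K :=
  (hF.FK_cont.continuousAt (prod_mem_nhds (Ioi_mem_nhds hK) (Ioi_mem_nhds one_pos))).comp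
    (f := fun K => (K, (1 : ℝ))) (by fun_prop)

lemma continuousAt_FX (hF : Assumption2 F FK FX m) {K : ℝ} (hK : 0 < K) :
    ContinuousAt (fun K => FX K 1) K :=
  (hF.FX_cont.continuousAt (prod_mem_nhds (Ioi_mem_nhds hK) (Ioi_mem_nhds one_pos))).comp
    (f := fun K => (K, (1 : ℝ))) (by fun_prop)

end Assumption2

/-- The ratio `P / W` of the land price to wealth. -/
noncomputable def landShare (μ : Measure ℝ) (β lam z : ℝ) : ℝ := β * (lam * Phi μ z + 1 - lam)

/-- Clearing denominators in `z = (P + F_X) / (F_K P)` with `P = landShare · F / (1 - landShare)`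
turns the threshold equation into `thresholdGap = 0`. -/
noncomputable def thresholdGap (μ : Measure ℝ) (β lam : ℝ) (F FK FX : ℝ → ℝ → ℝ) (K z : ℝ) : ℝ :=
  landShare μ β lam z * (FK K 1 * F K 1 * z + (FX K 1 - F K 1)) - FX K 1

noncomputable def nextCapital (μ : Measure ℝ) (β lam : ℝ) (F : ℝ → ℝ → ℝ) (K zb : ℝ) : ℝ :=
  β * lam * Wfun μ β lam F K zb * ∫ z in Ioi zb, z ∂μ

section LandShare

variable {μ : Measure ℝ} {β lam : ℝ}

lemma Assumption1.monotone_landShare (hμ : Assumption1 μ) (hβ : 0 ≤ β) (hlam : 0 ≤ lam) :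
    Monotone (landShare μ β lam) := fun a b hab => by
  have := hμ.prob
  have := monotone_cdf μ hab
  rw [← Phi_eq_cdf] at this
  unfold landShare
  gcongr

lemma Assumption1.continuous_landShare (hμ : Assumption1 μ) :
    Continuous (landShare μ β lam) := by
  have := hμ.prob
  have := hμ.nullSingletonClass
  have := continuous_Phi μ
  unfold landShare
  fun_prop

lemma Assumption1.landShare_le (hμ : Assumption1 μ) (hβ : 0 ≤ β) (hlam : 0 ≤ lam) (z : ℝ) :
    landShare μ β lam z ≤ β := by
  have := hμ.prob
  have := cdf_le_one μ z
  rw [← Phi_eq_cdf] at this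
  unfold landShare
  nlinarith [mul_le_mul_of_nonneg_left this hlam]

lemma Assumption1.landShare_zero_nonpos (hμ : Assumption1 μ) (hβ : 0 ≤ β) (hlam : 1 ≤ lam) :
    landShare μ β lam 0 ≤ 0 := by
  rw [landShare, hμ.Phi_zero]
  nlinarith

lemma Assumption1.tendsto_landShare (hμ : Assumption1 μ) :
    Tendsto (landShare μ β lam) atTop (𝓝 β) := by
  have := hμ.prob
  have h := (((tendsto_cdf_atTop μ).const_mul lam).add_const (1 - lam)).const_mul β
  rw [← Phi_eq_cdf] at h
  simp only [mul_one, add_sub_cancel] at h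
  exact h.congr fun z => by rw [landShare, add_sub_assoc]

lemma Assumption1.exists_landShare_mul_gt (hμ : Assumption1 μ) (hβ : 0 < β) {m : ℝ}
    (hm : 0 < m) : ∃ Z, 0 < Z ∧ 3 < landShare μ β lam Z * Z * m := by
  have h : Tendsto (fun z => landShare μ β lam z * z * m) atTop atTop :=
    (hμ.tendsto_landShare.pos_mul_atTop hβ tendsto_id).atTop_mul_const hm
  obtain ⟨Z, hZ, hZ₀⟩ := ((h.eventually_gt_atTop 3).and (eventually_gt_atTop 0)).exists
  exact ⟨Z, hZ₀, hZ⟩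

lemma Assumption1.landShare_add_le (hμ : Assumption1 μ) (hβ : 0 ≤ β) (hlam : 0 ≤ lam)
    (m z : ℝ) :
    landShare μ β lam z + β * lam * m * ∫ t in Ioi z, t ∂μ
      ≤ β + β * lam * ∫ t, max (m * t - 1) 0 ∂μ := by
  have := hμ.prob
  have h := Phi_add_mul_setIntegral_Ioi_le hμ.finite_mean m z
  calc landShare μ β lam z + β * lam * m * ∫ t in Ioi z, t ∂μ
      = β * (lam * (Phi μ z + m * ∫ t in Ioi z, t ∂μ) + 1 - lam) := by rw [landShare]; ring
    _ ≤ β * (lam * (1 + ∫ t, max (m * t - 1) 0 ∂μ) + 1 - lam) := by gcongr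
    _ = β + β * lam * ∫ t, max (m * t - 1) 0 ∂μ := by ring

lemma add_mul_lt_one_of_lt_lamBar {μ : Measure ℝ} {β lam m : ℝ} (hβ : β ∈ Ioo 0 1)
    (hT : 0 ≤ ∫ z, max (m * z - 1) 0 ∂μ) (hlt : lam < lamBar β m μ) :
    β + β * lam * ∫ z, max (m * z - 1) 0 ∂μ < 1 := by
  obtain ⟨hβ₀, hβ₁⟩ := hβ
  rcases hT.eq_or_lt with hT | hT
  · simpa [← hT] using hβ₁
  · rw [lamBar, lt_mul_inv_iff₀ hT, lt_div_iff₀ hβ₀] at hlt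
    linarith

lemma one_sub_inv_lt_Phi (hβ : 0 < β) (hlam : 0 < lam) {z : ℝ}
    (h : 0 < landShare μ β lam z) : 1 - 1 / lam < Phi μ z := by
  have h' : 0 < lam * Phi μ z + 1 - lam := pos_of_mul_pos_right h hβ.le
  rw [one_sub_div hlam.ne', div_lt_iff₀ hlam]
  linarith

end LandShare

section SteadyState

variable {μ : Measure ℝ} {F FK FX : ℝ → ℝ → ℝ} {m β lam : ℝ}

lemma Assumption2.thresholdGap_pos (hF : Assumption2 F FK FX m) {K Z : ℝ} (hK : 0 < K)
    (hx₀ : 0 ≤ landShare μ β lam Z) (hx₁ : landShare μ β lam Z ≤ 1)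
    (hZ : 3 < landShare μ β lam Z * Z * m) : 0 < thresholdGap μ β lam F FK FX K Z := by
  have hFpos := hF.pos K 1 hK one_pos
  have hFK := hF.le_FK hK
  have hFX := hF.FX_le hK
  have hFXpos := hF.FX_pos K 1 hK one_pos
  have hxZ : 0 ≤ landShare μ β lam Z * Z := by nlinarith [hF.m_pos]
  unfold thresholdGap
  nlinarith [mul_le_mul_of_nonneg_left hFK (mul_nonneg hxZ hFpos.le),
    mul_le_mul_of_nonneg_left hFX (sub_nonneg.2 hx₁)]

lemma Assumption2.continuousAt_thresholdGap (hF : Assumption2 F FK FX m) {K : ℝ} (hK : 0 < K)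
    (z : ℝ) : ContinuousAt (fun K => thresholdGap μ β lam F FK FX K z) K := by
  have := hF.continuousAt_F hK
  have := hF.continuousAt_FK hK
  have := hF.continuousAt_FX hK
  unfold thresholdGap
  fun_prop

/-- `r K` is the unique sign change of `thresholdGap K` to the right of a zero of `landShare`;
this uniqueness is what makes `r` continuous. -/
theorem exists_continuous_threshold (hμ : Assumption1 μ) (hF : Assumption2 F FK FX m)
    (hβ : β ∈ Ioo 0 1) (hlam : 1 ≤ lam) :
    ∃ r : ℝ → ℝ, ∃ Z, 0 < Z ∧ ContinuousOn r (Ioi 0) ∧ ∀ K, 0 < K →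
      r K ≤ Z ∧ 0 < landShare μ β lam (r K) ∧ thresholdGap μ β lam F FK FX K (r K) = 0 := by
  obtain ⟨hβ₀, hβ₁⟩ := hβ
  have hmono := hμ.monotone_landShare hβ₀.le (zero_le_one.trans hlam)
  obtain ⟨Z, hZ, hZx⟩ := hμ.exists_landShare_mul_gt (lam := lam) hβ₀ hF.m_pos
  have hxZ : 0 < landShare μ β lam Z := by
    by_contra! h
    nlinarith [mul_nonpos_of_nonpos_of_nonneg h hZ.le, hF.m_pos]
  have hxZ₁ : landShare μ β lam Z ≤ 1 :=
    (hμ.landShare_le hβ₀.le (zero_le_one.trans hlam) Z).trans hβ₁.le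
  obtain ⟨s, ⟨-, hsZ⟩, hs⟩ := intermediate_value_Icc hZ.le hμ.continuous_landShare.continuousOn
    ⟨hμ.landShare_zero_nonpos hβ₀.le hlam, hxZ.le⟩
  have hroot : ∀ K, ∃ r, 0 < K →
      r ≤ Z ∧ 0 < landShare μ β lam r ∧ IsSingleCrossing (thresholdGap μ β lam F FK FX K) s r := by
    intro K
    by_cases hK : 0 < K
    · obtain ⟨r, ⟨-, hrZ⟩, hxr, hcross⟩ := exists_isSingleCrossing hmono hμ.continuous_landShare
        (mul_pos (hF.FK_pos K 1 hK one_pos) (hF.pos K 1 hK one_pos)) (hF.FX_pos K 1 hK one_pos)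
        hs hsZ (hF.thresholdGap_pos hK hxZ.le hxZ₁ hZx)
      exact ⟨r, fun _ => ⟨hrZ, hxr, hcross⟩⟩
    · exact ⟨0, fun h => absurd h hK⟩
  choose r hr using hroot
  refine ⟨r, Z, hZ, fun K hK => (continuousAt_of_isSingleCrossing (s := s)
    (hF.continuousAt_thresholdGap (μ := μ) (β := β) (lam := lam) hK) ?_).continuousWithinAt,
    fun K hK => ?_⟩
  · filter_upwards [Ioi_mem_nhds hK] with K' hK' using (hr K' hK').2.2
  · obtain ⟨hrZ, hx, hcross⟩ := hr K hK
    exact ⟨hrZ, hx, hcross.apply_eq_zero⟩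

lemma eq_Pfun_div_of_thresholdGap_eq_zero {K z : ℝ} (hx₀ : 0 < landShare μ β lam z)
    (hx₁ : landShare μ β lam z < 1) (hF : 0 < F K 1) (hFK : 0 < FK K 1)
    (h : thresholdGap μ β lam F FK FX K z = 0) :
    z = (Pfun μ β lam F K z + FX K 1) / (FK K 1 * Pfun μ β lam F K z) := by
  have hP : Pfun μ β lam F K z = landShare μ β lam z * F K 1 / (1 - landShare μ β lam z) := rfl
  have hx₁' : 0 < 1 - landShare μ β lam z := sub_pos.2 hx₁
  unfold thresholdGap at h
  rw [hP, eq_div_iff (by positivity)]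
  field_simp
  linear_combination h

lemma Assumption2.continuousOn_nextCapital (hμ : Assumption1 μ) (hF : Assumption2 F FK FX m)
    {r : ℝ → ℝ} (hr : ContinuousOn r (Ioi 0)) (hx : ∀ K, landShare μ β lam (r K) ≠ 1) :
    ContinuousOn (fun K => nextCapital μ β lam F K (r K)) (Ioi 0) := fun K hK => by
  have hrK : ContinuousAt r K := hr.continuousAt (Ioi_mem_nhds hK)
  have hW : ContinuousAt (fun K => Wfun μ β lam F K (r K)) K :=
    (hF.continuousAt_F hK).div
      (continuousAt_const.sub (hμ.continuous_landShare.continuousAt.comp hrK))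
      (sub_ne_zero.2 (hx K).symm)
  exact ((continuousAt_const.mul hW).mul
    (hμ.continuous_setIntegral_Ioi_id.continuousAt.comp hrK)).continuousWithinAt

lemma Assumption2.eventually_lt_nextCapital (hμ : Assumption1 μ) (hF : Assumption2 F FK FX m)
    (hβ : 0 < β) (hlam : 0 < lam)
    (hInada : Tendsto (fun K => F K 1 / K) (𝓝[>] 0) atTop) {r : ℝ → ℝ} {Z : ℝ} (hZ : 0 < Z)
    (hr : ∀ K, 0 < K → r K ≤ Z ∧ 0 ≤ landShare μ β lam (r K) ∧ landShare μ β lam (r K) < 1) :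
    ∀ᶠ K in 𝓝[>] 0, K < nextCapital μ β lam F K (r K) := by
  have hIZ := hμ.setIntegral_Ioi_pos hZ
  have hc : 0 < β * lam * ∫ t in Ioi Z, t ∂μ := by positivity
  filter_upwards [hInada.eventually_gt_atTop (β * lam * ∫ t in Ioi Z, t ∂μ)⁻¹,
    self_mem_nhdsWithin] with K hFK (hK : 0 < K)
  obtain ⟨hrZ, hx₀, hx₁⟩ := hr K hK
  have hFpos := hF.pos K 1 hK one_pos
  have hW : F K 1 ≤ Wfun μ β lam F K (r K) :=
    le_div_self hFpos.le (sub_pos.2 hx₁) (sub_le_self 1 hx₀)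
  calc K = (β * lam * ∫ t in Ioi Z, t ∂μ) * ((β * lam * ∫ t in Ioi Z, t ∂μ)⁻¹ * K) := by
        field_simp
    _ < (β * lam * ∫ t in Ioi Z, t ∂μ) * F K 1 :=
        mul_lt_mul_of_pos_left ((lt_div_iff₀ hK).1 hFK) hc
    _ = β * lam * F K 1 * ∫ t in Ioi Z, t ∂μ := by ring
    _ ≤ β * lam * Wfun μ β lam F K (r K) * ∫ t in Ioi (r K), t ∂μ :=
        mul_le_mul (mul_le_mul_of_nonneg_left hW (by positivity)) (hμ.setIntegral_Ioi_anti hrZ)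
          hIZ.le (mul_nonneg (by positivity) (hFpos.le.trans hW))

lemma Assumption2.eventually_nextCapital_lt (hμ : Assumption1 μ) (hF : Assumption2 F FK FX m)
    (hβ : 0 < β) (hlam : 0 ≤ lam) {c : ℝ} (hc : c < 1)
    (hgap : ∀ z, landShare μ β lam z + β * lam * m * ∫ t in Ioi z, t ∂μ ≤ c) :
    ∀ᶠ K in atTop, ∀ z, nextCapital μ β lam F K z < K := by
  have hlim : Tendsto (fun K => β * lam * |F K 1 / K - m| * ∫ t, t ∂μ) atTop (𝓝 0) := by
    simpa using (((hF.lim_avg.sub_const m).abs).const_mul (β * lam)).mul_const (∫ t, t ∂μ)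
  filter_upwards [hlim.eventually (gt_mem_nhds (sub_pos.2 hc)), eventually_gt_atTop 0]
    with K hsmall hK z
  have hI₀ := hμ.setIntegral_Ioi_nonneg z
  have hIE := hμ.setIntegral_Ioi_le_integral z
  have hx₁ : landShare μ β lam z < 1 := by
    nlinarith [hgap z, mul_nonneg (mul_nonneg (mul_nonneg hβ.le hlam) hF.m_pos.le) hI₀]
  have key : β * lam * (F K 1 / K) * ∫ t in Ioi z, t ∂μ < 1 - landShare μ β lam z :=
    calc β * lam * (F K 1 / K) * ∫ t in Ioi z, t ∂μ
        = β * lam * m * (∫ t in Ioi z, t ∂μ) + β * lam * (F K 1 / K - m) * ∫ t in Ioi z, t ∂μ := by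
          ring
      _ ≤ β * lam * m * (∫ t in Ioi z, t ∂μ) + β * lam * |F K 1 / K - m| * ∫ t, t ∂μ := by
          gcongr
          · exact le_abs_self _
      _ < 1 - landShare μ β lam z := by linarith [hgap z]
  calc nextCapital μ β lam F K z
      = K * (β * lam * (F K 1 / K) * ∫ t in Ioi z, t ∂μ) / (1 - landShare μ β lam z) := by
        unfold nextCapital Wfun landShare
        field_simp
    _ < K := by
        rw [div_lt_iff₀ (sub_pos.2 hx₁)]
        exact mul_lt_mul_of_pos_left key hK

end SteadyState

theorem steady_state_exists_general
    (μ : Measure ℝ) (hμ : Assumption1 μ)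
    (F FK FX : ℝ → ℝ → ℝ) (m : ℝ) (hF : Assumption2 F FK FX m)
    (β lam : ℝ) (hβ : β ∈ Set.Ioo (0 : ℝ) 1) (hlam : 1 ≤ lam)
    (hlt : lam < lamBar β m μ)
    (hInada : Tendsto (fun K => F K 1 / K) (nhdsWithin 0 (Set.Ioi 0)) atTop) :
    ∃ K zb : ℝ, 0 < K ∧ 1 - 1 / lam < Phi μ zb ∧
      K = β * lam * Wfun μ β lam F K zb * ∫ z in Set.Ioi zb, z ∂μ ∧
      zb = (Pfun μ β lam F K zb + FX K 1) / (FK K 1 * Pfun μ β lam F K zb) := by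
  have hlam₀ : 0 < lam := zero_lt_one.trans_le hlam
  obtain ⟨r, Z, hZ, hrc, hr⟩ := exists_continuous_threshold hμ hF hβ hlam
  have hx₁ : ∀ K, landShare μ β lam (r K) < 1 :=
    fun K => (hμ.landShare_le hβ.1.le hlam₀.le _).trans_lt hβ.2
  have hsmall := hF.eventually_lt_nextCapital hμ hβ.1 hlam₀ hInada hZ
    fun K hK => ⟨(hr K hK).1, (hr K hK).2.1.le, hx₁ K⟩
  have hlarge := hF.eventually_nextCapital_lt hμ hβ.1 hlam₀.le
    (add_mul_lt_one_of_lt_lamBar hβ (integral_nonneg fun t => le_max_right _ _) hlt)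
    (hμ.landShare_add_le hβ.1.le hlam₀.le m)
  obtain ⟨K, hK, hKeq⟩ := isPreconnected_Ioi.intermediate_value₂_eventually₂ (l₁ := 𝓝[>] 0)
    inf_le_right (le_principal_iff.2 (Ioi_mem_atTop 0)) continuousOn_id
    (hF.continuousOn_nextCapital hμ hrc fun K => (hx₁ K).ne) (hsmall.mono fun _ => le_of_lt)
    (hlarge.mono fun K hK => (hK (r K)).le)
  obtain ⟨-, hxK, hgap⟩ := hr K hK
  exact ⟨K, r K, hK, one_sub_inv_lt_Phi hβ.1 hlam₀ hxK, hKeq,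
    eq_Pfun_div_of_thresholdGap_eq_zero hxK (hx₁ K) (hF.pos K 1 hK one_pos)
      (hF.FK_pos K 1 hK one_pos) hgap⟩

/-- **Proposition 2, part 1.** Under Assumptions 1–3, `1 ≤ λ < λ̄`, and the Inada
condition at zero, the equilibrium dynamics has a steady state `(K, z̄)`. -/
theorem steady_state_exists
    (μ : Measure ℝ) (hμ : Assumption1 μ)
    (F FK FX : ℝ → ℝ → ℝ) (m : ℝ) (hF : Assumption2 F FK FX m)
    (β lam : ℝ) (hβ : β ∈ Set.Ioo (0 : ℝ) 1) (hlam : 1 ≤ lam)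
    (hA3 : 1 - Phi μ (1 / m) < β * m * ∫ z in Set.Ioi (1 / m), z ∂μ)
    (hlt : lam < lamBar β m μ)
    (hInada : Tendsto (fun K => F K 1 / K) (nhdsWithin 0 (Set.Ioi 0)) atTop) :
    ∃ K zb : ℝ, 0 < K ∧ 1 - 1 / lam < Phi μ zb ∧
      K = β * lam * Wfun μ β lam F K zb * ∫ z in Set.Ioi zb, z ∂μ ∧
      zb = (Pfun μ β lam F K zb + FX K 1) / (FK K 1 * Pfun μ β lam F K zb) :=
  steady_state_exists_general μ hμ F FK FX m hF β lam hβ hlam hlt hInada
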